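/- Let p ≤ n be positive integers, let G, M ∈ ℍ^{n×n} be Hermitian positive definite (so M is invertible), and let X ∈ ℍ^{n×p} satisfy XᴴGX = I_p. Then every Y ∈ ℍ^{n×p} admits a unique decomposition Y = Z + M⁻¹GXS where Z ∈ ℍ^{n×p} satisfies ZᴴGX + XᴴGZ = 0 and S ∈ ℍ^{p×p} is Hermitian. -/

import Mathlib

/-!
Put `A = (GX)ᴴ M⁻¹ (GX)`. It is Hermitian positive definite, because `M⁻¹` is and `GX` has the
left inverse `Xᴴ`. For Hermitian `S`, the defect `ZᴴGX + XᴴGZ` of `Z = Y - M⁻¹GXS` equals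
`YᴴGX + XᴴGY - (SA + AS)`, so the decomposition amounts to solving the Lyapunov equation
`SA + AS = YᴴGX + XᴴGY` with `S` Hermitian. The operator `S ↦ SA + AS` is injective, since
`re tr (Sᴴ (SA + AS)) = re tr (SᴴAS) + re tr (SASᴴ) > 0` for `S ≠ 0`, hence bijective on the
finite-dimensional real space `ℍ^{p×p}`; and it commutes with `ᴴ`, so a Hermitian right-hand side
has a Hermitian solution.
-/

open Matrix
open scoped Quaternion

namespace Quaternion

variable {R : Type*} [CommRing R]

lemma re_sum {ι : Type*} (s : Finset ι) (f : ι → ℍ[R]) :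
    (∑ i ∈ s, f i).re = ∑ i ∈ s, (f i).re :=
  map_sum (QuaternionAlgebra.reₗ _ _ _) f s

lemma re_mul_comm (a b : ℍ[R]) : (a * b).re = (b * a).re := by
  simp only [re_mul]
  ring

end Quaternion

namespace Matrix

variable {m n α : Type*} [Fintype m] [Fintype n]

lemma re_trace_mul_comm {R : Type*} [CommRing R] (A : Matrix m n ℍ[R]) (B : Matrix n m ℍ[R]) :
    (A * B).trace.re = (B * A).trace.re := by
  simp only [trace, diag, mul_apply, Quaternion.re_sum, Quaternion.re_mul_comm (A _ _)]
  exact Finset.sum_comm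

section StarRing

variable [Semiring α] [StarRing α]

omit [Fintype m] in
lemma conjTranspose_mul_mul_apply_self (A : Matrix n n α) (S : Matrix n m α) (j : m) :
    (Sᴴ * A * S) j j = star (Sᵀ j) ⬝ᵥ A *ᵥ Sᵀ j := by
  rw [Matrix.mul_assoc, mul_apply, dotProduct]
  rfl

lemma star_dotProduct_conjTranspose_mul_mul_mulVec (A : Matrix n n α) (B : Matrix n m α)
    (x : m → α) : star x ⬝ᵥ (Bᴴ * A * B) *ᵥ x = star (B *ᵥ x) ⬝ᵥ A *ᵥ (B *ᵥ x) := by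
  rw [Matrix.mul_assoc, ← mulVec_mulVec, dotProduct_mulVec, ← star_mulVec, mulVec_mulVec]

lemma IsHermitian.invOf [DecidableEq n] {M : Matrix n n α} [Invertible M]
    (hM : M.IsHermitian) : (⅟M).IsHermitian := by
  rw [IsHermitian, conjTranspose_invOf]
  exact Invertible.congr _ _ hM

end StarRing

lemma mulVec_injective_of_mul_eq_one [Semiring α] [DecidableEq n] {B : Matrix m n α}
    {C : Matrix n m α} (h : C * B = 1) : Function.Injective B.mulVec :=
  Function.LeftInverse.injective (g := C.mulVec) fun x => by rw [mulVec_mulVec, h, one_mulVec]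

/-- Mathlib's `Matrix.PosDef` needs an order on the scalars, which `ℍ[ℝ]` does not carry. -/
def RePosDef (A : Matrix n n ℍ[ℝ]) : Prop :=
  ∀ x : n → ℍ[ℝ], x ≠ 0 → 0 < (star x ⬝ᵥ A *ᵥ x).re

namespace RePosDef

variable {A : Matrix n n ℍ[ℝ]}

lemma re_nonneg (hA : A.RePosDef) (x : n → ℍ[ℝ]) : 0 ≤ (star x ⬝ᵥ A *ᵥ x).re := by
  rcases eq_or_ne x 0 with rfl | hx
  · simp
  · exact (hA x hx).le

lemma conjTranspose_mul_mul (hA : A.RePosDef) {B : Matrix n m ℍ[ℝ]}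
    (hB : Function.Injective B.mulVec) : (Bᴴ * A * B).RePosDef := fun x hx => by
  rw [star_dotProduct_conjTranspose_mul_mul_mulVec]
  exact hA _ fun h => hx (hB (by rw [h, mulVec_zero]))

lemma invOf [DecidableEq n] [Invertible A] (hA : A.IsHermitian) (hA' : A.RePosDef) :
    (⅟A).RePosDef := by
  have h : ⅟A = (⅟A)ᴴ * A * ⅟A := by rw [hA.invOf.eq, invOf_mul_self, Matrix.one_mul]
  rw [h]
  exact hA'.conjTranspose_mul_mul (mulVec_injective_of_mul_eq_one (mul_invOf_self A))

lemma re_trace_conjTranspose_mul_mul_pos (hA : A.RePosDef) {S : Matrix n m ℍ[ℝ]} (hS : S ≠ 0) :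
    0 < (Sᴴ * A * S).trace.re := by
  obtain ⟨j, hj⟩ : ∃ j, Sᵀ j ≠ 0 := by
    by_contra! h
    exact hS (transpose_eq_zero.mp (funext h))
  simp only [trace, diag, Quaternion.re_sum, conjTranspose_mul_mul_apply_self]
  exact Finset.sum_pos' (fun i _ => hA.re_nonneg _) ⟨j, Finset.mem_univ j, hA _ hj⟩

end RePosDef

noncomputable def lyapunov (A : Matrix n n ℍ[ℝ]) : Matrix n n ℍ[ℝ] →ₗ[ℝ] Matrix n n ℍ[ℝ] where
  toFun S := S * A + A * S
  map_add' S T := by noncomm_ring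
  map_smul' r S := by simp only [RingHom.id_apply, Matrix.smul_mul, Matrix.mul_smul, smul_add]

lemma lyapunov_apply (A S : Matrix n n ℍ[ℝ]) : lyapunov A S = S * A + A * S := rfl

lemma conjTranspose_lyapunov {A : Matrix n n ℍ[ℝ]} (hA : A.IsHermitian) (S : Matrix n n ℍ[ℝ]) :
    (lyapunov A S)ᴴ = lyapunov A Sᴴ := by
  simp only [lyapunov_apply, conjTranspose_add, conjTranspose_mul, hA.eq, add_comm]

lemma RePosDef.lyapunov_injective {A : Matrix n n ℍ[ℝ]} (hA : A.RePosDef) :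
    Function.Injective (lyapunov A) := by
  rw [← LinearMap.ker_eq_bot, LinearMap.ker_eq_bot']
  intro S hS
  by_contra hS0
  have hSH : Sᴴ ≠ 0 := fun h => hS0 (conjTranspose_eq_zero.mp h)
  have key : (Sᴴ * A * S).trace.re + (Sᴴᴴ * A * Sᴴ).trace.re = 0 := by
    have := congrArg (fun T => (Sᴴ * T).trace.re) hS
    simp only [lyapunov_apply, Matrix.mul_add, trace_add, Quaternion.re_add, Matrix.mul_zero,
      trace_zero, Quaternion.re_zero, re_trace_mul_comm Sᴴ (S * A)] at this
    rw [conjTranspose_conjTranspose, Matrix.mul_assoc Sᴴ A S]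
    linarith
  linarith [hA.re_trace_conjTranspose_mul_mul_pos hS0, hA.re_trace_conjTranspose_mul_mul_pos hSH]

lemma RePosDef.lyapunov_bijective {A : Matrix n n ℍ[ℝ]} (hA : A.RePosDef) :
    Function.Bijective (lyapunov A) :=
  ⟨hA.lyapunov_injective, LinearMap.injective_iff_surjective.mp hA.lyapunov_injective⟩

lemma IsHermitian.of_lyapunov_eq {A S C : Matrix n n ℍ[ℝ]} (hA : A.IsHermitian)
    (hA' : A.RePosDef) (hC : C.IsHermitian) (hS : lyapunov A S = C) : S.IsHermitian :=
  hA'.lyapunov_injective (by rw [← conjTranspose_lyapunov hA, hS, hC.eq])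

end Matrix

section Stiefel

variable {n p : Type*} [Fintype n]

/-- `Z` is tangent to the generalized Stiefel manifold at `X` iff `tangentDefect G X Z = 0`. -/
noncomputable def tangentDefect (G : Matrix n n ℍ[ℝ]) (X Z : Matrix n p ℍ[ℝ]) : Matrix p p ℍ[ℝ] :=
  Zᴴ * G * X + Xᴴ * G * Z

variable {G : Matrix n n ℍ[ℝ]} {X : Matrix n p ℍ[ℝ]}

lemma tangentDefect_add (Z₁ Z₂ : Matrix n p ℍ[ℝ]) :
    tangentDefect G X (Z₁ + Z₂) = tangentDefect G X Z₁ + tangentDefect G X Z₂ := by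
  simp only [tangentDefect, conjTranspose_add, Matrix.add_mul, Matrix.mul_add]
  abel

lemma isHermitian_tangentDefect (hG : G.IsHermitian) (Z : Matrix n p ℍ[ℝ]) :
    (tangentDefect G X Z).IsHermitian := by
  simp only [IsHermitian, tangentDefect, conjTranspose_add, conjTranspose_mul,
    conjTranspose_conjTranspose, hG.eq, Matrix.mul_assoc, add_comm]

variable [Fintype p] [DecidableEq n] {M : Matrix n n ℍ[ℝ]} [Invertible M]

lemma tangentDefect_invOf_mul_mul (hG : G.IsHermitian) (hM : M.IsHermitian)
    {S : Matrix p p ℍ[ℝ]} (hS : S.IsHermitian) :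
    tangentDefect G X (⅟M * G * X * S) = lyapunov ((G * X)ᴴ * ⅟M * (G * X)) S := by
  simp only [tangentDefect, lyapunov_apply, conjTranspose_mul, hG.eq, hM.invOf.eq, hS.eq,
    Matrix.mul_assoc]

lemma rePosDef_conjTranspose_mul_invOf_mul [DecidableEq p] (hM : M.IsHermitian)
    (hM' : M.RePosDef) (hX : Xᴴ * G * X = 1) : ((G * X)ᴴ * ⅟M * (G * X)).RePosDef := by
  refine (RePosDef.invOf hM hM').conjTranspose_mul_mul (mulVec_injective_of_mul_eq_one (C := Xᴴ) ?_)
  rwa [← Matrix.mul_assoc]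

end Stiefel

theorem tangent_normal_decomposition_generalized_quaternionic_stiefel_general
    (n p : ℕ)
    (G M : Matrix (Fin n) (Fin n) ℍ[ℝ]) (hG : Gᴴ = G) (hM : Mᴴ = M)
    (hMpd : ∀ x : Fin n → ℍ[ℝ], x ≠ 0 → 0 < (star x ⬝ᵥ M *ᵥ x).re)
    [Invertible M]
    (X : Matrix (Fin n) (Fin p) ℍ[ℝ]) (hX : Xᴴ * G * X = 1)
    (Y : Matrix (Fin n) (Fin p) ℍ[ℝ]) :
    ∃! ZS : Matrix (Fin n) (Fin p) ℍ[ℝ] × Matrix (Fin p) (Fin p) ℍ[ℝ],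
      Y = ZS.1 + ⅟M * G * X * ZS.2 ∧
        ZS.1ᴴ * G * X + Xᴴ * G * ZS.1 = 0 ∧ ZS.2ᴴ = ZS.2 := by
  set A := (G * X)ᴴ * ⅟M * (G * X)
  have hA : A.IsHermitian := isHermitian_conjTranspose_mul_mul _ (IsHermitian.invOf hM)
  have hA' : A.RePosDef := rePosDef_conjTranspose_mul_invOf_mul hM hMpd hX
  have decomp {Z S} (hY : Y = Z + ⅟M * G * X * S) (hS : S.IsHermitian) :
      tangentDefect G X Y = tangentDefect G X Z + lyapunov A S := by
    rw [hY, tangentDefect_add, tangentDefect_invOf_mul_mul hG hM hS]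
  obtain ⟨S, hS⟩ := hA'.lyapunov_bijective.surjective (tangentDefect G X Y)
  have hSH : S.IsHermitian := hA.of_lyapunov_eq hA' (isHermitian_tangentDefect hG Y) hS
  have hY : Y = (Y - ⅟M * G * X * S) + ⅟M * G * X * S := (sub_add_cancel _ _).symm
  refine ⟨(Y - ⅟M * G * X * S, S), ⟨hY, ?_, hSH⟩, ?_⟩
  · have h := decomp hY hSH
    rw [hS, right_eq_add] at h
    exact h
  · rintro ⟨Z, T⟩ ⟨hZY, hZ, hT⟩
    have hTS : T = S := hA'.lyapunov_injective (by
      rw [hS, decomp hZY hT, show tangentDefect G X Z = 0 from hZ, zero_add])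
    subst hTS
    simp only [Prod.mk.injEq, and_true]
    exact eq_sub_of_add_eq hZY.symm

/-- Every `Y ∈ ℍ^{n×p}` decomposes uniquely as `Y = Z + M⁻¹GXS` with `Z` in the tangent
space at `X` (i.e. `ZᴴGX + XᴴGZ = 0`) and `S ∈ ℍ^{p×p}` Hermitian. -/
theorem tangent_normal_decomposition_generalized_quaternionic_stiefel
    (n p : ℕ) (hp : 0 < p) (hpn : p ≤ n)
    (G M : Matrix (Fin n) (Fin n) ℍ[ℝ]) (hG : Gᴴ = G) (hM : Mᴴ = M)
    (hGpd : ∀ x : Fin n → ℍ[ℝ], x ≠ 0 → 0 < (star x ⬝ᵥ G *ᵥ x).re)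
    (hMpd : ∀ x : Fin n → ℍ[ℝ], x ≠ 0 → 0 < (star x ⬝ᵥ M *ᵥ x).re)
    [Invertible M]
    (X : Matrix (Fin n) (Fin p) ℍ[ℝ]) (hX : Xᴴ * G * X = 1)
    (Y : Matrix (Fin n) (Fin p) ℍ[ℝ]) :
    ∃! ZS : Matrix (Fin n) (Fin p) ℍ[ℝ] × Matrix (Fin p) (Fin p) ℍ[ℝ],
      Y = ZS.1 + ⅟M * G * X * ZS.2 ∧
        ZS.1ᴴ * G * X + Xᴴ * G * ZS.1 = 0 ∧ ZS.2ᴴ = ZS.2 :=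
  tangent_normal_decomposition_generalized_quaternionic_stiefel_general n p G M hG hM hMpd X hX Y
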